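/- Let (X,f) be a zero-dimensional system, i.e., X is a nonempty compact metrizable totally disconnected space and f : X → X is a homeomorphism. Then there exists a minimal basic set B such that |B ∩ M| = 1 for every minimal set M; moreover, if x_M denotes the unique point of B ∩ M for each minimal set M, then B equals the closure of { x_M : M a minimal set }. -/

import Mathlib

open Set

/-- The full orbit `{fⁿ(x) : n ∈ ℤ}` of a point under a homeomorphism. -/
def orbitZ {X : Type*} [TopologicalSpace X] (f : X ≃ₜ X) (x : X) : Set X :=
  {y | ∃ n : ℤ, (f.toEquiv ^ n) x = y}

/-- `O(A) = ⋃_{n ∈ ℤ} fⁿ(A)`. -/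
def orbitSetZ {X : Type*} [TopologicalSpace X] (f : X ≃ₜ X) (A : Set X) : Set X :=
  ⋃ n : ℤ, (f.toEquiv ^ n) '' A

/-- `O⁺(A) = ⋃_{n ≥ 0} fⁿ(A)`. -/
def orbitSetP {X : Type*} [TopologicalSpace X] (f : X ≃ₜ X) (A : Set X) : Set X :=
  ⋃ n : ℕ, (f.toEquiv ^ (n : ℤ)) '' A

/-- `O⁻(A) = ⋃_{n ≤ 0} fⁿ(A)`. -/
def orbitSetN {X : Type*} [TopologicalSpace X] (f : X ≃ₜ X) (A : Set X) : Set X :=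
  ⋃ n : ℕ, (f.toEquiv ^ (-(n : ℤ))) '' A

/-- The ω-limit set of a point. -/
def omegaSet {X : Type*} [TopologicalSpace X] (f : X ≃ₜ X) (x : X) : Set X :=
  ⋂ n : ℕ, closure {y | ∃ m : ℕ, n ≤ m ∧ (f.toEquiv ^ (m : ℤ)) x = y}

/-- The α-limit set of a point. -/
def alphaSet {X : Type*} [TopologicalSpace X] (f : X ≃ₜ X) (x : X) : Set X :=
  ⋂ n : ℕ, closure {y | ∃ m : ℕ, n ≤ m ∧ (f.toEquiv ^ (-(m : ℤ))) x = y}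

/-- A minimal set: nonempty, closed, invariant, and every orbit in it is dense in it. -/
def IsMinimalSet {X : Type*} [TopologicalSpace X] (f : X ≃ₜ X) (M : Set X) : Prop :=
  M.Nonempty ∧ IsClosed M ∧ f '' M = M ∧ ∀ x ∈ M, M ⊆ closure (orbitZ f x)

/-- `M_f`: the closure of the union of all minimal sets. -/
def minimalUnion {X : Type*} [TopologicalSpace X] (f : X ≃ₜ X) : Set X :=
  closure (⋃₀ {M | IsMinimalSet f M})

/-- A wandering point. -/
def IsWandering {X : Type*} [TopologicalSpace X] (f : X ≃ₜ X) (x : X) : Prop :=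
  ∃ U : Set X, IsOpen U ∧ x ∈ U ∧ ∀ n : ℤ, n ≠ 0 → (f.toEquiv ^ n) '' U ∩ U = ∅

/-- `Ω_f`: the set of non-wandering points. -/
def nonWandering {X : Type*} [TopologicalSpace X] (f : X ≃ₜ X) : Set X :=
  {x | ¬ IsWandering f x}

/-- A quasi-section: a closed set every open neighborhood of which has full orbit. -/
def IsQuasiSection {X : Type*} [TopologicalSpace X] (f : X ≃ₜ X) (A : Set X) : Prop :=
  IsClosed A ∧ ∀ U : Set X, IsOpen U → A ⊆ U → orbitSetZ f U = Set.univ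

/-- A minimal quasi-section (minimal w.r.t. inclusion among quasi-sections). -/
def IsMinimalQuasiSection {X : Type*} [TopologicalSpace X] (f : X ≃ₜ X) (A : Set X) : Prop :=
  IsQuasiSection f A ∧ ∀ B : Set X, IsQuasiSection f B → B ⊆ A → B = A

/-- A basic set: a quasi-section meeting every orbit in at most one point. -/
def IsBasicSet {X : Type*} [TopologicalSpace X] (f : X ≃ₜ X) (A : Set X) : Prop :=
  IsQuasiSection f A ∧ ∀ x : X, (orbitZ f x ∩ A).Subsingleton

/-- A minimal basic set (minimal w.r.t. inclusion among basic sets). -/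
def IsMinimalBasicSet {X : Type*} [TopologicalSpace X] (f : X ≃ₜ X) (A : Set X) : Prop :=
  IsBasicSet f A ∧ ∀ B : Set X, IsBasicSet f B → B ⊆ A → B = A

/-- Densely aperiodic: the points with infinite orbit are dense. -/
def DenselyAperiodic {X : Type*} [TopologicalSpace X] (f : X ≃ₜ X) : Prop :=
  Dense {x : X | (orbitZ f x).Infinite}

/-!
Embed `X` continuously and injectively into `ℝ` (through the Cantor set, using a countable clopen
basis). In each minimal set `M` let `x_M` be the point where this embedding `φ` is smallest, and
let `B` be the closure of these points. The inequality "`φ z ≤ φ y` for all `y` in the orbit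
closure of `z`" is closed in `z`, so it holds on all of `B`; by injectivity of `φ`, `B` therefore
meets every orbit at most once and every minimal set `M` only in `x_M`. Every orbit closure
contains a minimal set, so `B` is a quasi-section; and a quasi-section inside `B` meets every
minimal set, hence contains every `x_M` and is all of `B`.
-/

section Dynamics

variable {X : Type*} [TopologicalSpace X] (f : X ≃ₜ X)

lemma Homeomorph.toEquiv_zpow (n : ℤ) : f.toEquiv ^ n = (f ^ n).toEquiv :=
  (map_zpow (MonoidHom.mk' Homeomorph.toEquiv fun _ _ => rfl) f n).symm

lemma continuous_toEquiv_zpow (n : ℤ) : Continuous (f.toEquiv ^ n) := by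
  rw [f.toEquiv_zpow]
  exact (f ^ n).continuous

open Pointwise in
lemma image_toEquiv_zpow_of_image_eq {M : Set X} (hM : f '' M = M) (n : ℤ) :
    (f.toEquiv ^ n) '' M = M :=
  (MulAction.stabilizer (Equiv.Perm X) M).zpow_mem (x := f.toEquiv) hM n

lemma orbitSetZ_of_image_eq {A : Set X} (hA : f '' A = A) : orbitSetZ f A = A := by
  simp only [orbitSetZ, image_toEquiv_zpow_of_image_eq f hA, iUnion_const]

lemma mem_orbitZ_self (x : X) : x ∈ orbitZ f x := ⟨0, rfl⟩

lemma image_orbitZ (x : X) : f '' orbitZ f x = orbitZ f x := by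
  change f '' range _ = range _
  conv_rhs => rw [← (Equiv.addLeft (1 : ℤ)).surjective.range_comp]
  rw [← range_comp]
  congr 1
  ext n
  simp [zpow_add]

lemma image_closure_orbitZ (x : X) : f '' closure (orbitZ f x) = closure (orbitZ f x) := by
  rw [f.image_closure, image_orbitZ]

lemma closure_orbitZ_subset {M : Set X} (hMc : IsClosed M) (hM : f '' M = M) {x : X}
    (hx : x ∈ M) : closure (orbitZ f x) ⊆ M := by
  refine closure_minimal ?_ hMc
  rintro _ ⟨n, rfl⟩
  rw [← image_toEquiv_zpow_of_image_eq f hM n]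
  exact mem_image_of_mem _ hx

lemma exists_isMinimalSet_subset [CompactSpace X] {K : Set X} (hKne : K.Nonempty)
    (hKc : IsClosed K) (hK : f '' K = K) : ∃ M ⊆ K, IsMinimalSet f M := by
  set S : Set (Set X) := {L | L.Nonempty ∧ IsClosed L ∧ f '' L = L}
  have chain_bound : ∀ c ⊆ S, IsChain (· ⊆ ·) c → c.Nonempty → ∃ lb ∈ S, ∀ L ∈ c, lb ⊆ L := by
    intro c hcS hchain hcne
    refine ⟨⋂₀ c, ⟨?_, isClosed_sInter fun L hL => (hcS hL).2.1, ?_⟩,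
      fun L hL => sInter_subset_of_mem hL⟩
    · have : Nonempty c := hcne.to_subtype
      rw [sInter_eq_iInter]
      refine IsCompact.nonempty_iInter_of_directed_nonempty_isCompact_isClosed _
        (IsChain.directedOn (r := fun s t : Set X => s ⊇ t) hchain.symm).directed_val
        (fun L => (hcS L.2).1) (fun L => (hcS L.2).2.1.isCompact) fun L => (hcS L.2).2.1
    · rw [sInter_eq_biInter, image_iInter₂ f.bijective]
      exact iInter₂_congr fun L hL => (hcS hL).2.2
  obtain ⟨M, hMK, hMmin⟩ := zorn_superset_nonempty S chain_bound K ⟨hKne, hKc, hK⟩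
  obtain ⟨hMne, hMc, hM⟩ := hMmin.1
  refine ⟨M, hMK, hMne, hMc, hM, fun x hx => hMmin.2 ?_ (closure_orbitZ_subset f hMc hM hx)⟩
  exact ⟨⟨x, subset_closure (mem_orbitZ_self f x)⟩, isClosed_closure, image_closure_orbitZ f x⟩

lemma IsQuasiSection.inter_nonempty {A M : Set X} (hA : IsQuasiSection f A)
    (hM : IsMinimalSet f M) : (A ∩ M).Nonempty := by
  obtain ⟨⟨x, hx⟩, hMc, hMinv, -⟩ := hM
  by_contra hAM
  have hAMc : A ⊆ Mᶜ := fun a ha haM => hAM ⟨a, ha, haM⟩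
  have hMcinv : f '' Mᶜ = Mᶜ := by rw [image_compl_eq f.bijective, hMinv]
  have := hA.2 Mᶜ hMc.isOpen_compl hAMc
  rw [orbitSetZ_of_image_eq f hMcinv] at this
  exact (this ▸ mem_univ x : x ∈ Mᶜ) hx

end Dynamics

section Argmins

variable {X α : Type*} [TopologicalSpace X] [LinearOrder α] [TopologicalSpace α]
  [OrderClosedTopology α] (f : X ≃ₜ X) (φ : X → α)

def minimalSetArgmins : Set X :=
  {x | ∃ M, IsMinimalSet f M ∧ x ∈ M ∧ IsMinOn φ M x}

variable {f φ}

lemma le_of_mem_closure_orbitZ_of_mem_closure_minimalSetArgmins (hφ : Continuous φ) {z : X}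
    (hz : z ∈ closure (minimalSetArgmins f φ)) {y : X} (hy : y ∈ closure (orbitZ f z)) :
    φ z ≤ φ y := by
  have hz_le_zpow : ∀ n : ℤ, φ z ≤ φ ((f.toEquiv ^ n) z) := by
    intro n
    refine closure_minimal ?_
      (isClosed_le hφ (hφ.comp (continuous_toEquiv_zpow f n))) hz
    rintro x ⟨M, hM, hxM, hxmin⟩
    exact hxmin (image_toEquiv_zpow_of_image_eq f hM.2.2.1 n ▸ mem_image_of_mem _ hxM)
  refine closure_minimal ?_ (isClosed_le continuous_const hφ) hy
  rintro _ ⟨n, rfl⟩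
  exact hz_le_zpow n

lemma closure_minimalSetArgmins_inter_eq_singleton (hφ : Continuous φ) (hφi : φ.Injective)
    {M : Set X} (hM : IsMinimalSet f M) {p : X} (hpM : p ∈ M) (hpmin : IsMinOn φ M p) :
    closure (minimalSetArgmins f φ) ∩ M = {p} := by
  refine Subset.antisymm ?_ (singleton_subset_iff.2 ⟨subset_closure ⟨M, hM, hpM, hpmin⟩, hpM⟩)
  rintro z ⟨hzB, hzM⟩
  exact hφi (le_antisymm
    (le_of_mem_closure_orbitZ_of_mem_closure_minimalSetArgmins hφ hzB (hM.2.2.2 z hzM hpM))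
    (hpmin hzM))

lemma orbitZ_inter_closure_minimalSetArgmins_subsingleton (hφ : Continuous φ)
    (hφi : φ.Injective) (x : X) : (orbitZ f x ∩ closure (minimalSetArgmins f φ)).Subsingleton := by
  rintro _ ⟨⟨m, rfl⟩, hmB⟩ _ ⟨⟨n, rfl⟩, hnB⟩
  have shift (k l : ℤ) : (f.toEquiv ^ k) x ∈ orbitZ f ((f.toEquiv ^ l) x) :=
    ⟨k - l, by rw [← Equiv.Perm.mul_apply, ← zpow_add, sub_add_cancel]⟩
  exact hφi (le_antisymm
    (le_of_mem_closure_orbitZ_of_mem_closure_minimalSetArgmins hφ hmB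
      (subset_closure (shift n m)))
    (le_of_mem_closure_orbitZ_of_mem_closure_minimalSetArgmins hφ hnB
      (subset_closure (shift m n))))

lemma IsQuasiSection.eq_closure_minimalSetArgmins_of_subset (hφ : Continuous φ)
    (hφi : φ.Injective) {A : Set X} (hA : IsQuasiSection f A)
    (hAB : A ⊆ closure (minimalSetArgmins f φ)) : A = closure (minimalSetArgmins f φ) := by
  refine hAB.antisymm (closure_minimal ?_ hA.1)
  rintro p ⟨M, hM, hpM, hpmin⟩
  obtain ⟨a, haA, haM⟩ := hA.inter_nonempty f hM
  rwa [← (closure_minimalSetArgmins_inter_eq_singleton hφ hφi hM hpM hpmin).subset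
    ⟨hAB haA, haM⟩]

variable [CompactSpace X]

lemma IsMinimalSet.exists_isMinOn (hφ : Continuous φ) {M : Set X} (hM : IsMinimalSet f M) :
    ∃ p ∈ M, IsMinOn φ M p :=
  hM.2.1.isCompact.exists_isMinOn hM.1 hφ.continuousOn

lemma isQuasiSection_closure_minimalSetArgmins (hφ : Continuous φ) :
    IsQuasiSection f (closure (minimalSetArgmins f φ)) := by
  refine ⟨isClosed_closure, fun U hU hBU => eq_univ_of_forall fun x => ?_⟩
  obtain ⟨M, hMx, hM⟩ := exists_isMinimalSet_subset f ⟨x, subset_closure (mem_orbitZ_self f x)⟩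
    isClosed_closure (image_closure_orbitZ f x)
  obtain ⟨p, hpM, hpmin⟩ := hM.exists_isMinOn hφ
  obtain ⟨_, hyU, n, rfl⟩ :=
    mem_closure_iff.1 (hMx hpM) U hU (hBU (subset_closure ⟨M, hM, hpM, hpmin⟩))
  exact mem_iUnion.2 ⟨-n, _, hyU, by simp [← Equiv.Perm.mul_apply]⟩

theorem exists_minimalBasicSet_of_continuous_injective (hφ : Continuous φ)
    (hφi : φ.Injective) :
    ∃ B : Set X, IsMinimalBasicSet f B ∧
      (∀ M : Set X, IsMinimalSet f M → ∃ p : X, B ∩ M = {p}) ∧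
      ∀ c : Set X → X, (∀ M : Set X, IsMinimalSet f M → c M ∈ B ∩ M) →
        B = closure (c '' {M | IsMinimalSet f M}) := by
  have inter_eq {M : Set X} (hM : IsMinimalSet f M) {p : X} (hpM : p ∈ M)
      (hpmin : IsMinOn φ M p) : closure (minimalSetArgmins f φ) ∩ M = {p} :=
    closure_minimalSetArgmins_inter_eq_singleton hφ hφi hM hpM hpmin
  refine ⟨closure (minimalSetArgmins f φ),
    ⟨⟨isQuasiSection_closure_minimalSetArgmins hφ,
      orbitZ_inter_closure_minimalSetArgmins_subsingleton hφ hφi⟩,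
      fun A hA hAB => hA.1.eq_closure_minimalSetArgmins_of_subset hφ hφi hAB⟩,
    fun M hM => ?_, fun c hc => congrArg closure (Subset.antisymm ?_ ?_)⟩
  · obtain ⟨p, hpM, hpmin⟩ := hM.exists_isMinOn hφ
    exact ⟨p, inter_eq hM hpM hpmin⟩
  · rintro p ⟨M, hM, hpM, hpmin⟩
    exact ⟨M, hM, (inter_eq hM hpM hpmin).subset (hc M hM)⟩
  · rintro _ ⟨M, hM, rfl⟩
    obtain ⟨p, hpM, hpmin⟩ := hM.exists_isMinOn hφ
    rw [(inter_eq hM hpM hpmin).subset (hc M hM)]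
    exact ⟨M, hM, hpM, hpmin⟩

end Argmins

section CantorEmbedding

variable {X : Type*} [TopologicalSpace X] [CompactSpace X] [T2Space X]
  [TotallyDisconnectedSpace X] [SecondCountableTopology X]

lemma exists_continuous_injective_cantorSpace :
    ∃ ψ : X → ℕ → Bool, Continuous ψ ∧ ψ.Injective := by
  obtain ⟨s, hs_clopen, hs_count, hs_basis⟩ :=
    isTopologicalBasis_isClopen.exists_countable (α := X)
  -- `univ` is added so that the family can be enumerated even when `X` is empty.
  obtain ⟨u, hu⟩ := (hs_count.insert univ).exists_eq_range (insert_nonempty _ _)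
  have hu_clopen (n : ℕ) : IsClopen (u n) := by
    rcases (hu ▸ mem_range_self n : u n ∈ insert univ s) with h | h
    · exact h ▸ isClopen_univ
    · exact hs_clopen h
  refine ⟨fun x n => (u n).boolIndicator x,
    continuous_pi fun n => (continuous_boolIndicator_iff_isClopen _).2 (hu_clopen n),
    fun x y hxy => by_contra fun hne => ?_⟩
  obtain ⟨V, hVs, hxV, hVy⟩ :=
    hs_basis.exists_subset_of_mem_open (mem_compl_singleton_iff.2 hne) isOpen_compl_singleton
  obtain ⟨n, rfl⟩ : V ∈ range u := hu ▸ mem_insert_of_mem _ hVs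
  have hyV : y ∉ u n := fun hy => hVy hy rfl
  simpa [boolIndicator, hxV, hyV] using congr_fun hxy n

lemma exists_continuous_injective_real : ∃ φ : X → ℝ, Continuous φ ∧ φ.Injective := by
  obtain ⟨ψ, hψ, hψi⟩ := exists_continuous_injective_cantorSpace (X := X)
  let e := cantorSetHomeomorphNatToBool.symm
  exact ⟨(↑) ∘ e ∘ ψ, continuous_subtype_val.comp (e.continuous.comp hψ),
    Subtype.val_injective.comp (e.injective.comp hψi)⟩

end CantorEmbedding

theorem stmt18_general {X : Type*} [TopologicalSpace X] [CompactSpace X] [TopologicalSpace.MetrizableSpace X] [TotallyDisconnectedSpace X] (f : X ≃ₜ X) :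
    ∃ B : Set X, IsMinimalBasicSet f B ∧
      (∀ M : Set X, IsMinimalSet f M → ∃ p : X, B ∩ M = {p}) ∧
      ∀ c : Set X → X, (∀ M : Set X, IsMinimalSet f M → c M ∈ B ∩ M) →
        B = closure (c '' {M | IsMinimalSet f M}) := by
  obtain ⟨φ, hφ, hφi⟩ := exists_continuous_injective_real (X := X)
  exact exists_minimalBasicSet_of_continuous_injective hφ hφi

theorem stmt18 {X : Type*} [TopologicalSpace X] [CompactSpace X] [TopologicalSpace.MetrizableSpace X] [TotallyDisconnectedSpace X] [Nonempty X] (f : X ≃ₜ X) :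
    ∃ B : Set X, IsMinimalBasicSet f B ∧
      (∀ M : Set X, IsMinimalSet f M → ∃ p : X, B ∩ M = {p}) ∧
      ∀ c : Set X → X, (∀ M : Set X, IsMinimalSet f M → c M ∈ B ∩ M) →
        B = closure (c '' {M | IsMinimalSet f M}) :=
  stmt18_general f
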